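/- For real λ ≥ 1 and a > -1, if Y has the exponential power density f(y) = exp(-|y|^λ/λ) / (2 λ^{1/λ} Γ(1+1/λ)) on ℝ, then E(|Y|^a ln|Y|) = λ^{a/λ - 2} Γ((a+1)/λ) [ln λ + ψ((a+1)/λ)] / Γ(1+1/λ), where ψ is the digamma function. -/

import Mathlib

open Real MeasureTheory

/-- The exponential power density `EPD_λ(0,1)`. -/
noncomputable def epdDensity (lam y : ℝ) : ℝ :=
  Real.exp (-(|y| ^ lam) / lam) / (2 * lam ^ (1 / lam) * Real.Gamma (1 + 1 / lam))

/-- The digamma function `ψ = (log ∘ Γ)'`. -/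
noncomputable def digamma (x : ℝ) : ℝ := deriv (fun t => Real.log (Real.Gamma t)) x

/-!
The integrand is even, so the moment is twice the integral over `(0, ∞)`. The substitution
`u = x ^ λ` turns `∫ x ^ a log x e^{-x^λ/λ}` into `λ⁻² ∫ u ^ (s - 1) log u e^{-u/λ}` with
`s = (a + 1) / λ`, and `u = λ t` reduces this to `λ ^ s (log λ ⬝ Γ(s) + ∫ t ^ (s - 1) log t e^{-t})`.
The last integral is `Γ'(s) = Γ(s) ψ(s)`: it is the Mellin transform of `log t ⬝ e^{-t}`, which
is the derivative of the Mellin transform `Γ` of `e^{-t}`.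
-/

open Set Filter Asymptotics Topology

lemma ofReal_cpow_sub_one {t : ℝ} (ht : 0 ≤ t) (s : ℝ) :
    (t : ℂ) ^ ((s : ℂ) - 1) = ((t ^ (s - 1) : ℝ) : ℂ) := by
  rw [Complex.ofReal_cpow ht]
  push_cast
  rfl

lemma integrableOn_rpow_mul_log_mul_exp_neg {s : ℝ} (hs : 0 < s) :
    IntegrableOn (fun t : ℝ => t ^ (s - 1) * log t * exp (-t)) (Ioi 0) := by
  let f : ℝ → ℂ := fun t => (exp (-t) : ℂ)
  have hf : Continuous f := by fun_prop
  have hf_top : f =O[atTop] (· ^ (-(s + 1))) := by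
    rw [← isBigO_norm_left]
    simp_rw [f, Complex.norm_real, isBigO_norm_left]
    simpa only [neg_one_mul] using (isLittleO_exp_neg_mul_rpow_atTop zero_lt_one _).isBigO
  have hf_bot : f =O[𝓝[>] 0] (· ^ (-0 : ℝ)) := by
    simp_rw [neg_zero, rpow_zero]
    exact hf.continuousWithinAt.isBigO_one ℝ
  have hlog_f : LocallyIntegrableOn (fun t : ℝ => log t • f t) (Ioi 0) :=
    ContinuousOn.locallyIntegrableOn (fun t ht =>
      ((continuousAt_log (ne_of_gt ht)).smul hf.continuousAt).continuousWithinAt) measurableSet_Ioi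
  have hmellin := mellinConvergent_of_isBigO_rpow (s := (s : ℂ)) hlog_f
    (isBigO_rpow_top_log_smul (b := s + 1 / 2) (by linarith) hf_top) (by simp)
    (isBigO_rpow_zero_log_smul (b := s / 2) (by linarith) hf_bot) (by simpa using hs)
  refine IntegrableOn.congr_fun (Integrable.re hmellin) (fun t (ht : 0 < t) => ?_)
    measurableSet_Ioi
  simp only [f, ofReal_cpow_sub_one ht.le, Complex.real_smul, smul_eq_mul, ← Complex.ofReal_mul,
    RCLike.re_to_complex, Complex.ofReal_re, mul_assoc]

lemma hasDerivAt_Gamma_integral {s : ℝ} (hs : 0 < s) :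
    HasDerivAt Gamma (∫ t in Ioi 0, t ^ (s - 1) * log t * exp (-t)) s := by
  have hs' : 0 < (s : ℂ).re := by simpa using hs
  have hGamma : HasDerivAt Complex.Gamma
      (∫ t : ℝ in Ioi 0, (t : ℂ) ^ ((s : ℂ) - 1) * (log t * exp (-t))) s :=
    (Complex.hasDerivAt_GammaIntegral hs').congr_of_eventuallyEq <| by
      filter_upwards [(isOpen_lt continuous_const Complex.continuous_re).mem_nhds hs'] with z hz
      exact Complex.Gamma_eq_integral hz
  have hintegral : ∫ t : ℝ in Ioi 0, (t : ℂ) ^ ((s : ℂ) - 1) * (log t * exp (-t))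
      = ((∫ t in Ioi 0, t ^ (s - 1) * log t * exp (-t) : ℝ) : ℂ) := by
    refine Eq.trans ?_ (integral_ofReal (𝕜 := ℂ))
    refine setIntegral_congr_fun measurableSet_Ioi fun t (ht : 0 < t) => ?_
    rw [ofReal_cpow_sub_one ht.le, ← mul_assoc]
    norm_cast
  rw [hintegral] at hGamma
  exact hGamma.real_of_complex

lemma integral_rpow_mul_log_mul_exp_neg {s : ℝ} (hs : 0 < s) :
    ∫ t in Ioi 0, t ^ (s - 1) * log t * exp (-t) = Gamma s * digamma s := by
  rw [digamma, ((hasDerivAt_Gamma_integral hs).log (Gamma_pos_of_pos hs).ne').deriv]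
  field_simp [(Gamma_pos_of_pos hs).ne']

lemma integral_rpow_mul_log_mul_exp_neg_div {s b : ℝ} (hs : 0 < s) (hb : 0 < b) :
    ∫ u in Ioi 0, u ^ (s - 1) * log u * exp (-u / b) = b ^ s * Gamma s * (log b + digamma s) := by
  have hscale := integral_comp_mul_left_Ioi (fun u => u ^ (s - 1) * log u * exp (-u / b)) 0 hb
  rw [mul_zero, smul_eq_mul] at hscale
  have hexpand : ∀ x ∈ Ioi (0 : ℝ), (b * x) ^ (s - 1) * log (b * x) * exp (-(b * x) / b)
      = b ^ (s - 1) * (log b * (exp (-x) * x ^ (s - 1)) + x ^ (s - 1) * log x * exp (-x)) := by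
    intro x (hx : 0 < x)
    rw [mul_rpow hb.le hx.le, log_mul hb.ne' hx.ne', neg_div, mul_div_cancel_left₀ x hb.ne']
    ring
  calc ∫ u in Ioi 0, u ^ (s - 1) * log u * exp (-u / b)
      = b * ∫ x in Ioi 0, (b * x) ^ (s - 1) * log (b * x) * exp (-(b * x) / b) := by
        rw [hscale, ← mul_assoc, mul_inv_cancel₀ hb.ne', one_mul]
    _ = b * (b ^ (s - 1) * (log b * Gamma s + Gamma s * digamma s)) := by
        rw [setIntegral_congr_fun measurableSet_Ioi hexpand, integral_const_mul,
          integral_add ((GammaIntegral_convergent hs).const_mul _)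
            (integrableOn_rpow_mul_log_mul_exp_neg hs),
          integral_const_mul, ← Gamma_eq_integral hs, integral_rpow_mul_log_mul_exp_neg hs]
    _ = b ^ s * Gamma s * (log b + digamma s) := by
        rw [rpow_sub_one hb.ne']
        field_simp

lemma integral_rpow_mul_log_mul_comp_rpow (g : ℝ → ℝ) {a p : ℝ} (hp : 0 < p) :
    ∫ x in Ioi 0, x ^ a * log x * g (x ^ p)
      = (∫ u in Ioi 0, u ^ ((a + 1) / p - 1) * log u * g u) / p ^ 2 := by
  have hsubst := integral_comp_rpow_Ioi_of_pos hp
    (g := fun u => u ^ ((a + 1) / p - 1) * log u * g u)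
  beta_reduce at hsubst
  rw [← hsubst, eq_div_iff (by positivity), ← integral_mul_const]
  refine setIntegral_congr_fun measurableSet_Ioi fun x (hx : 0 < x) => ?_
  have hpow : x ^ (p - 1) * (x ^ p) ^ ((a + 1) / p - 1) = x ^ a := by
    rw [← rpow_mul hx.le, ← rpow_add hx]
    congr 1
    field_simp
    ring
  rw [smul_eq_mul, log_rpow hx, ← hpow]
  ring

lemma integral_rpow_mul_log_mul_exp_neg_rpow_div {a p b : ℝ} (ha : -1 < a) (hp : 0 < p)
    (hb : 0 < b) :
    ∫ x in Ioi 0, x ^ a * log x * exp (-x ^ p / b)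
      = b ^ ((a + 1) / p) * Gamma ((a + 1) / p) * (log b + digamma ((a + 1) / p)) / p ^ 2 := by
  rw [integral_rpow_mul_log_mul_comp_rpow (fun u => exp (-u / b)) hp,
    integral_rpow_mul_log_mul_exp_neg_div (div_pos (by linarith) hp) hb]

lemma epdDensity_abs (lam y : ℝ) : epdDensity lam |y| = epdDensity lam y := by
  rw [epdDensity, epdDensity, abs_abs]

theorem epd_abs_log_moment (lam a : ℝ) (hlam : 1 ≤ lam) (ha : -1 < a) :
    ∫ y : ℝ, |y| ^ a * Real.log |y| * epdDensity lam y
      = lam ^ (a / lam - 2) * Real.Gamma ((a + 1) / lam)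
          * (Real.log lam + digamma ((a + 1) / lam)) / Real.Gamma (1 + 1 / lam) := by
  have hlam0 : 0 < lam := one_pos.trans_le hlam
  have hdensity : ∀ x ∈ Ioi (0 : ℝ), x ^ a * log x * epdDensity lam x
      = (x ^ a * log x * exp (-x ^ lam / lam)) / (2 * lam ^ (1 / lam) * Gamma (1 + 1 / lam)) :=
    fun x hx => by rw [epdDensity, abs_of_pos hx, mul_div_assoc]
  have hexponent : lam ^ ((a + 1) / lam) = lam ^ (a / lam - 2) * lam ^ 2 * lam ^ (1 / lam) := by
    rw [← rpow_natCast, ← rpow_add hlam0, ← rpow_add hlam0]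
    congr 1
    field_simp
    push_cast
    ring
  calc ∫ y : ℝ, |y| ^ a * log |y| * epdDensity lam y
      = ∫ y : ℝ, (fun x => x ^ a * log x * epdDensity lam x) |y| := by simp only [epdDensity_abs]
    _ = 2 * ∫ x in Ioi 0, x ^ a * log x * epdDensity lam x :=
        integral_comp_abs (f := fun x => x ^ a * log x * epdDensity lam x)
    _ = 2 * (∫ x in Ioi 0, x ^ a * log x * exp (-x ^ lam / lam))
          / (2 * lam ^ (1 / lam) * Gamma (1 + 1 / lam)) := by
        rw [setIntegral_congr_fun measurableSet_Ioi hdensity, integral_div, mul_div_assoc]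
    _ = _ := by
        rw [integral_rpow_mul_log_mul_exp_neg_rpow_div ha hlam0 hlam0, hexponent]
        field_simp
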